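/- Let α, β > 0 with √α + √β < √2. Then there exist κ > 0, T > 0, and a smooth loop γ : [0,T] → ℝ² with γ(0) = γ(T) and γ'(0) = γ'(T), such that ∫₀ᵀ (L(γ(t), γ'(t)) + κ) dt < 0. (Hence the Mañé critical value, characterized as the supremum of those κ for which some loop has negative free-period action S_κ, is strictly positive, i.e. c_u > e₀ = 0.) -/

import Mathlib

/-- Lagrangian of the planar electromagnetic toy model:
`L((x,y),(v₁,v₂)) = ½(v₁²+v₂²) − y v₁ + x v₂ + αx² + βy²`. -/
noncomputable def toyLag (α β : ℝ) (q v : ℝ × ℝ) : ℝ :=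
  (1/2)*(v.1^2 + v.2^2) - q.2*v.1 + q.1*v.2 + α*q.1^2 + β*q.2^2

/-- If `√α + √β < √2`, there are `κ > 0` and a smooth loop with negative
free-period action `S_κ`; hence the Mañé critical value is strictly positive. -/
theorem stmt_7 (α β : ℝ) (hα : 0 < α) (hβ : 0 < β)
    (h : Real.sqrt α + Real.sqrt β < Real.sqrt 2) :
    ∃ κ > (0:ℝ), ∃ T > (0:ℝ), ∃ γ : ℝ → ℝ × ℝ,
      ContDiff ℝ (⊤ : ℕ∞) γ ∧ γ 0 = γ T ∧ deriv γ 0 = deriv γ T ∧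
      (∫ t in (0:ℝ)..T, (toyLag α β (γ t) (deriv γ t) + κ)) < 0 := by
  have hab : 0 < α*β := mul_pos hα hβ
  set s := Real.sqrt (α*β) with hs_def
  have hs : 0 < s := Real.sqrt_pos.mpr hab
  have hs2 : s^2 = α*β := Real.sq_sqrt hab.le
  set w := Real.sqrt (2*s) with hw_def
  have hw : 0 < w := Real.sqrt_pos.mpr (by linarith)
  have hw2 : w^2 = 2*s := Real.sq_sqrt (by linarith)
  have hkey : s + (α+β)/2 < 1 := by
    have h2 : (Real.sqrt α + Real.sqrt β)^2 < (Real.sqrt 2)^2 := by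
      nlinarith [Real.sqrt_nonneg α, Real.sqrt_nonneg β, Real.sqrt_nonneg 2]
    have e1 : Real.sqrt α ^2 = α := Real.sq_sqrt hα.le
    have e2 : Real.sqrt β ^2 = β := Real.sq_sqrt hβ.le
    have e3 : Real.sqrt 2 ^2 = 2 := Real.sq_sqrt (by norm_num)
    have e4 : Real.sqrt α * Real.sqrt β = s := (Real.sqrt_mul hα.le β).symm
    nlinarith
  set A := w/2 + α/w with hA_def
  have hA : 0 < A := by positivity
  set a := 1/A with ha_def
  have ha : 0 < a := by positivity
  set P := a^2*w^2/2 + β - a*w with hP_def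
  set Q := w^2/2 + α*a^2 - a*w with hQ_def
  have hAB : A * (w/2 + β/w) < 1 := by
    have e : A * (w/2 + β/w) = w^2/4 + (α+β)/2 + α*β/w^2 := by
      field_simp [hA_def]; rw [hA_def]; field_simp; ring
    rw [e, hw2, ← hs2]
    have : s^2/(2*s) = s/2 := by field_simp
    rw [this]; linarith
  have hPQ : P + Q < 0 := by
    have e : P + Q = w*(A*(w/2 + β/w) - 1)/A := by
      rw [hP_def, hQ_def, ha_def]; field_simp; rw [hA_def]; field_simp; ring
    rw [e]
    exact div_neg_of_neg_of_pos (mul_neg_of_pos_of_neg hw (by linarith)) hA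
  set T := 2*Real.pi/w with hT_def
  have hT : 0 < T := by positivity
  have hwT : w * T = 2*Real.pi := by
    rw [hT_def]; field_simp
  set γ : ℝ → ℝ × ℝ := fun t => (a * Real.cos (w*t), - Real.sin (w*t)) with hγ_def
  have hd : ∀ t : ℝ, HasDerivAt γ (a * (-Real.sin (w*t) * w), -(Real.cos (w*t)*w)) t := by
    intro t
    have h1 : HasDerivAt (fun t:ℝ => w*t) w t := by
      simpa using (hasDerivAt_id t).const_mul w
    have hcos := (Real.hasDerivAt_cos (w*t)).comp t h1
    have hsin := (Real.hasDerivAt_sin (w*t)).comp t h1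
    exact (hcos.const_mul a).prodMk hsin.neg
  have hderiv : deriv γ = fun t => (a * (-Real.sin (w*t) * w), -(Real.cos (w*t)*w)) :=
    funext fun t => (hd t).deriv
  refine ⟨-(P+Q)/4, div_pos (neg_pos.mpr hPQ) (by norm_num), T, hT, γ, ?_, ?_, ?_, ?_⟩
  · exact (contDiff_const.mul (Real.contDiff_cos.comp (contDiff_const.mul contDiff_id))).prodMk
      (Real.contDiff_sin.comp (contDiff_const.mul contDiff_id)).neg
  · rw [hγ_def]
    simp only [] 
    simp [hwT, Real.cos_two_pi, Real.sin_two_pi]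
  · rw [hderiv]
    simp [hwT, Real.cos_two_pi, Real.sin_two_pi]
  · rw [hderiv]
    have hpt : ∀ t : ℝ,
        toyLag α β (γ t) (a * (-Real.sin (w*t) * w), -(Real.cos (w*t)*w)) + (-(P+Q)/4)
          = (P+Q)/4 + (Q-P)/2 * Real.cos (2*(w*t)) := by
      intro t
      simp only [toyLag, hγ_def]
      have hsc := Real.sin_sq_add_cos_sq (w*t)
      have hc2 := Real.cos_sq (w*t)
      linear_combination P * hsc + (Q-P) * hc2
    have hcong : (∫ t in (0:ℝ)..T,
        (toyLag α β (γ t) ((fun t => (a * (-Real.sin (w*t) * w), -(Real.cos (w*t)*w))) t) + -(P+Q)/4))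
        = ∫ t in (0:ℝ)..T, ((P+Q)/4 + (Q-P)/2 * Real.cos (2*(w*t))) := by
      apply intervalIntegral.integral_congr
      intro t _
      simpa using hpt t
    rw [hcong]
    set G : ℝ → ℝ := fun t => (P+Q)/4 * t + (Q-P)/2 * (Real.sin (2*(w*t)) / (2*w)) with hG_def
    have hG : ∀ t : ℝ, HasDerivAt G ((P+Q)/4 + (Q-P)/2 * Real.cos (2*(w*t))) t := by
      intro t
      have h2 : HasDerivAt (fun t:ℝ => 2*(w*t)) (2*w) t := by
        simpa [mul_assoc] using ((hasDerivAt_id t).const_mul (2*w))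
      have hsin := ((Real.hasDerivAt_sin (2*(w*t))).comp t h2).div_const (2*w)
      have h3 : HasDerivAt (fun t:ℝ => (P+Q)/4 * t) ((P+Q)/4) t := by
        simpa using (hasDerivAt_id t).const_mul ((P+Q)/4)
      have := h3.add (hsin.const_mul ((Q-P)/2))
      refine this.congr_deriv ?_
      field_simp [hw.ne']
    have hInt : IntervalIntegrable (fun t:ℝ => (P+Q)/4 + (Q-P)/2 * Real.cos (2*(w*t)))
        MeasureTheory.volume 0 T := by
      apply Continuous.intervalIntegrable
      fun_prop
    rw [intervalIntegral.integral_eq_sub_of_hasDerivAt (fun t _ => hG t) hInt]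
    have hsin4 : Real.sin (2*(w*T)) = 0 := by
      rw [hwT, show (2:ℝ)*(2*Real.pi) = 2*Real.pi + 2*Real.pi by ring, Real.sin_add]
      simp
    rw [hG_def]
    have hG0 : G 0 = 0 := by simp [hG_def]
    have hGT : G T = (P+Q)/4 * T := by
      simp [hG_def, hsin4]
    show G T - G 0 < 0
    rw [hG0, hGT, sub_zero]
    exact mul_neg_of_neg_of_pos (div_neg_of_neg_of_pos hPQ (by norm_num)) hT
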